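/- Let {v, w} be an orthonormal basis of ℂ² and let b ∈ {0,1}. Suppose that for every x ∈ {0,1}, measuring H^b|x⟩ in the basis {v,w} yields an outcome with bias at least 1/√2, i.e., | |⟨v, H^b|x⟩⟩|² − |⟨w, H^b|x⟩⟩|² | ≥ 1/√2. Then for every x ∈ {0,1}, measuring H^{b⊕1}|x⟩ in the basis {v,w} yields an outcome with bias at most 1/√2, i.e., | |⟨v, H^{b⊕1}|x⟩⟩|² − |⟨w, H^{b⊕1}|x⟩⟩|² | ≤ 1/√2. -/

import Mathlib

/-!
Let `U = M H^b`, where `M` has rows `v†` and `w†`. Then `U` is unitary, and since `H² = 1` the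
amplitudes measured on `H^b|x⟩` and on `H^{b⊕1}|y⟩ = H^b H|y⟩` are the columns of `U` and of `UH`.
By unitarity both biases are read off the first row `(a, c)` of `U`: the first is
`±(|a|² - |c|²)`, the second `±2 Re(ā c)`. These are two coordinates of the Bloch vector of
`(a, c)`, so their squares add up to at most `(|a|² + |c|²)² = 1`; a bias of at least `1/√2` for
one measurement therefore forces a bias of at most `1/√2` for the other.
-/

/-- The 2×2 Hadamard matrix `(1/√2)·[[1,1],[1,-1]]`. -/
noncomputable def Hmat : Matrix (Fin 2) (Fin 2) ℂ :=
  ((1 / Real.sqrt 2 : ℝ) : ℂ) • !![1, 1; 1, -1]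

/-- The standard basis vector `|x⟩` of ℂ². -/
def ket (x : Fin 2) : Fin 2 → ℂ := fun i => if i = x then 1 else 0

/-- The inner product `⟨v, ψ⟩` on ℂ² (conjugate-linear in the first argument). -/
noncomputable def dotc (v ψ : Fin 2 → ℂ) : ℂ :=
  star (v 0) * ψ 0 + star (v 1) * ψ 1

open Matrix ComplexConjugate

theorem Complex.sq_norm_sub_sq_norm_sq_add_sq_re_le (a c : ℂ) :
    (‖a‖ ^ 2 - ‖c‖ ^ 2) ^ 2 + (2 * (conj a * c).re) ^ 2 ≤ (‖a‖ ^ 2 + ‖c‖ ^ 2) ^ 2 := by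
  have re_sq_le : (conj a * c).re ^ 2 ≤ ‖a‖ ^ 2 * ‖c‖ ^ 2 :=
    calc (conj a * c).re ^ 2 ≤ ‖conj a * c‖ ^ 2 := by
          rw [← sq_abs]; gcongr; exact Complex.abs_re_le_norm _
      _ = ‖a‖ ^ 2 * ‖c‖ ^ 2 := by rw [norm_mul, Complex.norm_conj, mul_pow]
  nlinarith

lemma sq_norm_inv_sqrt_two_mul (z : ℂ) :
    ‖((1 / Real.sqrt 2 : ℝ) : ℂ) * z‖ ^ 2 = ‖z‖ ^ 2 / 2 := by
  rw [norm_mul, mul_pow, Complex.norm_real, Real.norm_eq_abs, sq_abs, div_pow,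
    Real.sq_sqrt zero_le_two]
  ring

lemma abs_le_inv_sqrt_two_of_sq_add_sq_le_one {s t : ℝ} (h : s ^ 2 + t ^ 2 ≤ 1)
    (hs : 1 / Real.sqrt 2 ≤ |s|) : |t| ≤ 1 / Real.sqrt 2 := by
  have half : (1 / Real.sqrt 2) ^ 2 = 1 / 2 := by
    rw [div_pow, one_pow, Real.sq_sqrt zero_le_two]
  have hs2 : 1 / 2 ≤ s ^ 2 := by
    rw [← half, ← sq_abs s]; gcongr
  calc |t| ≤ |1 / Real.sqrt 2| := sq_le_sq.mp (by linarith)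
    _ = 1 / Real.sqrt 2 := abs_of_pos (by positivity)

lemma ket_eq_single (x : Fin 2) : ket x = Pi.single x 1 := by
  ext i; simp [ket, Pi.single_apply]

lemma mulVec_ket (A : Matrix (Fin 2) (Fin 2) ℂ) (x : Fin 2) : A *ᵥ ket x = fun i => A i x := by
  rw [ket_eq_single, mulVec_single_one]; rfl

lemma mul_Hmat_apply_zero (A : Matrix (Fin 2) (Fin 2) ℂ) (i : Fin 2) :
    (A * Hmat) i 0 = ((1 / Real.sqrt 2 : ℝ) : ℂ) * (A i 0 + A i 1) := by
  simp [Hmat, mul_apply, Fin.sum_univ_two]; ring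

lemma mul_Hmat_apply_one (A : Matrix (Fin 2) (Fin 2) ℂ) (i : Fin 2) :
    (A * Hmat) i 1 = ((1 / Real.sqrt 2 : ℝ) : ℂ) * (A i 0 - A i 1) := by
  simp [Hmat, mul_apply, Fin.sum_univ_two]; ring

lemma Hmat_mul_self : Hmat * Hmat = 1 := by
  have inv_sqrt_two_sq : ((Real.sqrt 2 : ℝ) : ℂ)⁻¹ * ((Real.sqrt 2 : ℝ) : ℂ)⁻¹ = 1 / 2 := by
    rw [← mul_inv, ← Complex.ofReal_mul, Real.mul_self_sqrt zero_le_two]; norm_num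
  ext i j
  fin_cases i <;> fin_cases j <;> simp [Hmat, mul_apply, Fin.sum_univ_two] <;>
    linear_combination 2 * inv_sqrt_two_sq

lemma Hmat_isHermitian : Hmat.IsHermitian := by
  ext i j
  fin_cases i <;> fin_cases j <;> simp [Hmat, conjTranspose_apply]

lemma Hmat_mem_unitaryGroup : Hmat ∈ unitaryGroup (Fin 2) ℂ := by
  rw [mem_unitaryGroup_iff, star_eq_conjTranspose, Hmat_isHermitian.eq, Hmat_mul_self]

lemma Hmat_pow_add_one (b : Fin 2) : Hmat ^ ((b + 1 : Fin 2) : ℕ) = Hmat ^ (b : ℕ) * Hmat := by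
  fin_cases b <;> simp [Hmat_mul_self]

/-- The signed bias of measuring `ψ` in the standard basis; the bias is its absolute value. -/
noncomputable def bias (ψ : Fin 2 → ℂ) : ℝ := ‖ψ 0‖ ^ 2 - ‖ψ 1‖ ^ 2

section UnitaryFinTwo

variable {U : Matrix (Fin 2) (Fin 2) ℂ}

lemma sq_norm_add_sq_norm_row (hU : U ∈ unitaryGroup (Fin 2) ℂ) (i : Fin 2) :
    ‖U i 0‖ ^ 2 + ‖U i 1‖ ^ 2 = 1 := by
  have h := congr_fun₂ (mem_unitaryGroup_iff.mp hU) i i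
  simp only [mul_apply, Fin.sum_univ_two, star_apply, RCLike.star_def, Complex.mul_conj',
    one_apply_eq] at h
  exact_mod_cast h

lemma sq_norm_add_sq_norm_col (hU : U ∈ unitaryGroup (Fin 2) ℂ) (j : Fin 2) :
    ‖U 0 j‖ ^ 2 + ‖U 1 j‖ ^ 2 = 1 := by
  have h := congr_fun₂ (mem_unitaryGroup_iff'.mp hU) j j
  simp only [mul_apply, Fin.sum_univ_two, star_apply, RCLike.star_def, Complex.conj_mul',
    one_apply_eq] at h
  exact_mod_cast h

lemma conj_mul_add_conj_mul_col_eq_zero (hU : U ∈ unitaryGroup (Fin 2) ℂ) :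
    conj (U 0 0) * U 0 1 + conj (U 1 0) * U 1 1 = 0 := by
  simpa [mul_apply, Fin.sum_univ_two] using congr_fun₂ (mem_unitaryGroup_iff'.mp hU) 0 1

lemma bias_mulVec_ket_sq (hU : U ∈ unitaryGroup (Fin 2) ℂ) (x : Fin 2) :
    bias (U *ᵥ ket x) ^ 2 = (‖U 0 0‖ ^ 2 - ‖U 0 1‖ ^ 2) ^ 2 := by
  have row₀ := sq_norm_add_sq_norm_row hU 0
  have col₀ := sq_norm_add_sq_norm_col hU 0
  have col₁ := sq_norm_add_sq_norm_col hU 1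
  revert x
  simp only [Fin.forall_fin_two, bias, mulVec_ket]
  constructor
  · congr 1; linarith
  · rw [← neg_sq]; congr 1; linarith

lemma bias_mul_Hmat_mulVec_ket_sq (hU : U ∈ unitaryGroup (Fin 2) ℂ) (y : Fin 2) :
    bias ((U * Hmat) *ᵥ ket y) ^ 2 = (2 * (conj (U 0 0) * U 0 1).re) ^ 2 := by
  have row₀ := sq_norm_add_sq_norm_row hU 0
  have row₁ := sq_norm_add_sq_norm_row hU 1
  have orth := congrArg Complex.re (conj_mul_add_conj_mul_col_eq_zero hU)
  rw [Complex.add_re, Complex.zero_re] at orth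
  revert y
  simp only [Fin.forall_fin_two, bias, mulVec_ket, mul_Hmat_apply_zero, mul_Hmat_apply_one,
    sq_norm_inv_sqrt_two_mul, norm_add_sq (𝕜 := ℂ), norm_sub_sq (𝕜 := ℂ), RCLike.inner_apply,
    RCLike.re_to_complex]
  rw [mul_comm (U 0 1), mul_comm (U 1 1)]
  constructor
  · congr 1; linarith
  · rw [← neg_sq]; congr 1; linarith

theorem bias_sq_add_bias_mul_Hmat_sq_le_one (hU : U ∈ unitaryGroup (Fin 2) ℂ) (x y : Fin 2) :
    bias (U *ᵥ ket x) ^ 2 + bias ((U * Hmat) *ᵥ ket y) ^ 2 ≤ 1 := by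
  rw [bias_mulVec_ket_sq hU, bias_mul_Hmat_mulVec_ket_sq hU]
  simpa [sq_norm_add_sq_norm_row hU 0] using
    Complex.sq_norm_sub_sq_norm_sq_add_sq_re_le (U 0 0) (U 0 1)

end UnitaryFinTwo

def coordMatrix (v w : Fin 2 → ℂ) : Matrix (Fin 2) (Fin 2) ℂ := Matrix.of ![star v, star w]

lemma sq_norm_dotc_sub_sq_norm_dotc (v w φ : Fin 2 → ℂ) :
    ‖dotc v φ‖ ^ 2 - ‖dotc w φ‖ ^ 2 = bias (coordMatrix v w *ᵥ φ) := by
  simp [bias, coordMatrix, dotc, mulVec, dotProduct, Fin.sum_univ_two]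

lemma coordMatrix_mem_unitaryGroup {v w : Fin 2 → ℂ}
    (hv : dotc v v = 1) (hw : dotc w w = 1) (hvw : dotc v w = 0) :
    coordMatrix v w ∈ unitaryGroup (Fin 2) ℂ := by
  have hwv : dotc w v = 0 := by
    simpa [dotc, mul_comm] using congrArg star hvw
  simp only [dotc, RCLike.star_def] at hv hw hvw hwv
  rw [mem_unitaryGroup_iff]
  ext i j
  fin_cases i <;> fin_cases j <;> simpa [coordMatrix, mul_apply, Fin.sum_univ_two]

/-- If measuring `H^b|x⟩` in the orthonormal basis `{v, w}` has outcome bias at least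
`1/√2` for every `x ∈ {0,1}`, then measuring `H^{b⊕1}|x⟩` in `{v, w}` has outcome
bias at most `1/√2` for every `x ∈ {0,1}`. -/
theorem stmt10 (v w : Fin 2 → ℂ)
    (hv : dotc v v = 1) (hw : dotc w w = 1) (hvw : dotc v w = 0)
    (b : Fin 2)
    (hbig : ∀ x : Fin 2,
      1 / Real.sqrt 2 ≤
        |‖dotc v ((Hmat ^ (b : ℕ)).mulVec (ket x))‖ ^ 2
          - ‖dotc w ((Hmat ^ (b : ℕ)).mulVec (ket x))‖ ^ 2|) :
    ∀ x : Fin 2,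
      |‖dotc v ((Hmat ^ ((b + 1 : Fin 2) : ℕ)).mulVec (ket x))‖ ^ 2
          - ‖dotc w ((Hmat ^ ((b + 1 : Fin 2) : ℕ)).mulVec (ket x))‖ ^ 2|
        ≤ 1 / Real.sqrt 2 := by
  intro x
  have hU : coordMatrix v w * Hmat ^ (b : ℕ) ∈ unitaryGroup (Fin 2) ℂ :=
    mul_mem (coordMatrix_mem_unitaryGroup hv hw hvw) (pow_mem Hmat_mem_unitaryGroup _)
  have hbig₀ := hbig 0
  rw [sq_norm_dotc_sub_sq_norm_dotc, mulVec_mulVec] at hbig₀ ⊢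
  rw [Hmat_pow_add_one, ← Matrix.mul_assoc]
  exact abs_le_inv_sqrt_two_of_sq_add_sq_le_one
    (bias_sq_add_bias_mul_Hmat_sq_le_one hU 0 x) hbig₀
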